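/- arXiv:1311.3077 — 2 statements merged into one kernel-verified Lean document; each statement's English description precedes it below -/
import Mathlib

section
/- Bochner-type inequality for the Reeb derivative (Lemma 3.3, inequality (3.19), Heisenberg group with flat target): let n, m ≥ 1 and let u : ℝ^{2n+1} → ℝ^m be smooth with Δ_b u = 0 everywhere. Then at every point, Δ_b(‖∂_t u‖²) ≥ ∑_{α=1}^n (‖X_α(∂_t u)‖² + ‖Y_α(∂_t u)‖²). -/
open Real Filter

/-- The underlying space of the Heisenberg group `ℍⁿ = ℝ^{2n+1}`,
with coordinates `(x, y, t) ∈ ℝⁿ × ℝⁿ × ℝ`. -/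
abbrev Heis (n : ℕ) := (Fin n → ℝ) × (Fin n → ℝ) × ℝ

/-- The horizontal vector field `X_α = ∂/∂x^α + 2 y^α ∂/∂t` at the point `p`. -/
def Xvec (n : ℕ) (α : Fin n) (p : Heis n) : Heis n := (Pi.single α 1, 0, 2 * p.2.1 α)

/-- The horizontal vector field `Y_α = ∂/∂y^α − 2 x^α ∂/∂t` at the point `p`. -/
def Yvec (n : ℕ) (α : Fin n) (p : Heis n) : Heis n := (0, Pi.single α 1, -(2 * p.1 α))

/-- The Reeb (characteristic) direction `T = ∂/∂t`. -/
def Tvec (n : ℕ) : Heis n := (0, 0, 1)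

variable {n : ℕ} {E : Type*} [NormedAddCommGroup E] [NormedSpace ℝ E]

/-- Directional derivative `X_α u`. -/
noncomputable def Xd (α : Fin n) (u : Heis n → E) : Heis n → E :=
  fun p => fderiv ℝ u p (Xvec n α p)

/-- Directional derivative `Y_α u`. -/
noncomputable def Yd (α : Fin n) (u : Heis n → E) : Heis n → E :=
  fun p => fderiv ℝ u p (Yvec n α p)

/-- Directional derivative `∂_t u` in the Reeb direction. -/
noncomputable def Td (u : Heis n → E) : Heis n → E :=
  fun p => fderiv ℝ u p (Tvec n)

/-- The sub-Laplacian `Δ_b u = (1/2) ∑_α (X_α(X_α u) + Y_α(Y_α u))`. -/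
noncomputable def subLap (u : Heis n → E) : Heis n → E :=
  fun p => (1 / 2 : ℝ) • ∑ α : Fin n, (Xd α (Xd α u) p + Yd α (Yd α u) p)

/-! ### Auxiliary lemmas -/

lemma smooth_Xvec (α : Fin n) : ContDiff ℝ (⊤ : ℕ∞) (Xvec n α) := by
  unfold Xvec; fun_prop

lemma smooth_Yvec (α : Fin n) : ContDiff ℝ (⊤ : ℕ∞) (Yvec n α) := by
  unfold Yvec; fun_prop

noncomputable def coordX (n : ℕ) (α : Fin n) : Heis n →L[ℝ] ℝ :=
  (ContinuousLinearMap.proj α).comp (ContinuousLinearMap.fst ℝ (Fin n → ℝ) ((Fin n → ℝ) × ℝ))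

noncomputable def coordY (n : ℕ) (α : Fin n) : Heis n →L[ℝ] ℝ :=
  ((ContinuousLinearMap.proj α).comp (ContinuousLinearMap.fst ℝ (Fin n → ℝ) ℝ)).comp
    (ContinuousLinearMap.snd ℝ (Fin n → ℝ) ((Fin n → ℝ) × ℝ))

lemma fderiv_Xvec_T (α : Fin n) (p : Heis n) : fderiv ℝ (Xvec n α) p (Tvec n) = 0 := by
  have h : HasFDerivAt (Xvec n α)
      ((0 : Heis n →L[ℝ] (Fin n → ℝ)).prod (((0 : Heis n →L[ℝ] (Fin n → ℝ))).prod
        ((2:ℝ) • coordY n α))) p := by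
    refine HasFDerivAt.prodMk (hasFDerivAt_const _ _) (HasFDerivAt.prodMk (hasFDerivAt_const _ _) ?_)
    exact ((coordY n α).hasFDerivAt).const_mul 2
  rw [h.fderiv]
  simp [Tvec, coordY, Prod.ext_iff]

lemma fderiv_Yvec_T (α : Fin n) (p : Heis n) : fderiv ℝ (Yvec n α) p (Tvec n) = 0 := by
  have h : HasFDerivAt (Yvec n α)
      ((0 : Heis n →L[ℝ] (Fin n → ℝ)).prod (((0 : Heis n →L[ℝ] (Fin n → ℝ))).prod
        (-((2:ℝ) • coordX n α)))) p := by
    refine HasFDerivAt.prodMk (hasFDerivAt_const _ _) (HasFDerivAt.prodMk (hasFDerivAt_const _ _) ?_)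
    exact (((coordX n α).hasFDerivAt).const_mul 2).neg
  rw [h.fderiv]
  simp [Tvec, coordX, Prod.ext_iff]

lemma smooth_dd {f : Heis n → E} (hf : ContDiff ℝ (⊤ : ℕ∞) f) {V : Heis n → Heis n}
    (hV : ContDiff ℝ (⊤ : ℕ∞) V) : ContDiff ℝ (⊤ : ℕ∞) (fun p => fderiv ℝ f p (V p)) :=
  (hf.fderiv_right (by simp)).clm_apply hV

/-- The Reeb field commutes with any smooth vector field whose coefficients are
independent of `t`. -/
lemma comm_dd {f : Heis n → E} (hf : ContDiff ℝ (⊤ : ℕ∞) f) {V : Heis n → Heis n}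
    (hV : ContDiff ℝ (⊤ : ℕ∞) V) (p : Heis n) (hVT : fderiv ℝ V p (Tvec n) = 0) :
    fderiv ℝ (fun q => fderiv ℝ f q (V q)) p (Tvec n)
      = fderiv ℝ (fun q => fderiv ℝ f q (Tvec n)) p (V p) := by
  have hF : ContDiff ℝ (⊤ : ℕ∞) (fderiv ℝ f) := hf.fderiv_right (by simp)
  have hFd : DifferentiableAt ℝ (fderiv ℝ f) p := hF.differentiable (by simp) p
  have hVd : DifferentiableAt ℝ V p := hV.differentiable (by simp) p
  have hsymm : ∀ v w, fderiv ℝ (fderiv ℝ f) p v w = fderiv ℝ (fderiv ℝ f) p w v := by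
    refine second_derivative_symmetric (f := f) (fun y => ?_) hFd.hasFDerivAt
    exact (hf.differentiable (by simp) y).hasFDerivAt
  rw [fderiv_clm_apply hFd hVd, fderiv_clm_apply hFd (differentiableAt_const _)]
  simp [hVT, hsymm (Tvec n) (V p)]

lemma fderiv_normsq {m : ℕ} {v : Heis n → EuclideanSpace ℝ (Fin m)}
    (hv : ContDiff ℝ (⊤ : ℕ∞) v) (p w : Heis n) :
    fderiv ℝ (fun q => ‖v q‖ ^ 2) p w
      = 2 * (inner ℝ (fderiv ℝ v p w) (v p) : ℝ) := by
  have h : (fun q => ‖v q‖ ^ 2) = fun q => (inner ℝ (v q) (v q) : ℝ) :=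
    funext fun q => (real_inner_self_eq_norm_sq _).symm
  rw [h, fderiv_inner_apply ℝ (hv.differentiable (by simp) p) (hv.differentiable (by simp) p)]
  rw [real_inner_comm]; ring

lemma dd_dd_normsq {m : ℕ} {v : Heis n → EuclideanSpace ℝ (Fin m)}
    (hv : ContDiff ℝ (⊤ : ℕ∞) v) {V : Heis n → Heis n} (hV : ContDiff ℝ (⊤ : ℕ∞) V) (p : Heis n) :
    fderiv ℝ (fun q => fderiv ℝ (fun r => ‖v r‖ ^ 2) q (V q)) p (V p)
      = 2 * ‖fderiv ℝ v p (V p)‖ ^ 2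
        + 2 * (inner ℝ (fderiv ℝ (fun q => fderiv ℝ v q (V q)) p (V p)) (v p) : ℝ) := by
  have hDv : ContDiff ℝ (⊤ : ℕ∞) (fun q => fderiv ℝ v q (V q)) := smooth_dd hv hV
  have h1 : (fun q => fderiv ℝ (fun r => ‖v r‖ ^ 2) q (V q))
      = fun q => 2 * (inner ℝ (fderiv ℝ v q (V q)) (v q) : ℝ) :=
    funext fun q => fderiv_normsq hv q (V q)
  rw [h1]
  have hdi : DifferentiableAt ℝ (fun q => (inner ℝ (fderiv ℝ v q (V q)) (v q) : ℝ)) p :=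
    (hDv.differentiable (by simp) p).inner ℝ (hv.differentiable (by simp) p)
  rw [fderiv_const_mul hdi 2]
  simp only [ContinuousLinearMap.smul_apply, smul_eq_mul]
  rw [fderiv_inner_apply ℝ (hDv.differentiable (by simp) p) (hv.differentiable (by simp) p)]
  have : (inner ℝ (fderiv ℝ v p (V p)) (fderiv ℝ v p (V p)) : ℝ)
      = ‖fderiv ℝ v p (V p)‖ ^ 2 := real_inner_self_eq_norm_sq _
  rw [this]; ring

/-- Lemma 3.3, inequality (3.19), on the Heisenberg group with flat
target: a Bochner-type inequality for the Reeb derivative of a pseudoharmonic map: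
`Δ_b(‖∂_t u‖²) ≥ ∑_α (‖X_α(∂_t u)‖² + ‖Y_α(∂_t u)‖²)`. -/
theorem bochner_reeb_pseudoharmonic (n m : ℕ) (hn : 1 ≤ n) (hm : 1 ≤ m)
    (u : Heis n → EuclideanSpace ℝ (Fin m)) (hu : ContDiff ℝ (⊤ : ℕ∞) u)
    (hph : ∀ p, subLap u p = 0) :
    ∀ p, (∑ α : Fin n, (‖Xd α (Td u) p‖ ^ 2 + ‖Yd α (Td u) p‖ ^ 2)) ≤
      subLap (fun q => ‖Td u q‖ ^ 2) p := by
  intro p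
  set v : Heis n → EuclideanSpace ℝ (Fin m) := Td u with hv_def
  have hv : ContDiff ℝ (⊤ : ℕ∞) v := smooth_dd hu contDiff_const
  -- the pseudoharmonicity gives vanishing of the sum of second derivatives of u
  have hS : ∀ q, ∑ α : Fin n, (Xd α (Xd α u) q + Yd α (Yd α u) q) = 0 := by
    intro q
    have h := hph q
    simp only [subLap] at h
    rcases smul_eq_zero.1 h with h' | h'
    · norm_num at h'
    · exact h'
  -- commutation : v's horizontal second derivatives are Reeb derivatives of u's
  have hcommX : ∀ α : Fin n, Xd α (Xd α v) p = Td (Xd α (Xd α u)) p := by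
    intro α
    have h1 : Xd α v = Td (Xd α u) := by
      funext q
      exact (comm_dd hu (smooth_Xvec α) q (fderiv_Xvec_T α q)).symm
    rw [show Xd α (Xd α v) p = fderiv ℝ (Xd α v) p (Xvec n α p) from rfl, h1]
    exact (comm_dd (smooth_dd hu (smooth_Xvec α)) (smooth_Xvec α) p (fderiv_Xvec_T α p)).symm
  have hcommY : ∀ α : Fin n, Yd α (Yd α v) p = Td (Yd α (Yd α u)) p := by
    intro α
    have h1 : Yd α v = Td (Yd α u) := by
      funext q
      exact (comm_dd hu (smooth_Yvec α) q (fderiv_Yvec_T α q)).symm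
    rw [show Yd α (Yd α v) p = fderiv ℝ (Yd α v) p (Yvec n α p) from rfl, h1]
    exact (comm_dd (smooth_dd hu (smooth_Yvec α)) (smooth_Yvec α) p (fderiv_Yvec_T α p)).symm
  -- the key cancellation: ∑ (X_α X_α v + Y_α Y_α v) = 0
  have hXXu : ∀ α : Fin n, ContDiff ℝ (⊤ : ℕ∞) (Xd α (Xd α u)) := fun α =>
    smooth_dd (smooth_dd hu (smooth_Xvec α)) (smooth_Xvec α)
  have hYYu : ∀ α : Fin n, ContDiff ℝ (⊤ : ℕ∞) (Yd α (Yd α u)) := fun α =>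
    smooth_dd (smooth_dd hu (smooth_Yvec α)) (smooth_Yvec α)
  have hzero : ∑ α : Fin n, (Xd α (Xd α v) p + Yd α (Yd α v) p) = 0 := by
    have h1 : fderiv ℝ (fun q => ∑ α : Fin n, (Xd α (Xd α u) q + Yd α (Yd α u) q)) p
        = ∑ α : Fin n, (fderiv ℝ (Xd α (Xd α u)) p + fderiv ℝ (Yd α (Yd α u)) p) := by
      rw [fderiv_fun_sum (A := fun α q => Xd α (Xd α u) q + Yd α (Yd α u) q) (fun α _ => (((hXXu α).differentiable (by simp) p).add
        (((hYYu α).differentiable (by simp) p))))]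
      exact Finset.sum_congr rfl fun α _ => fderiv_fun_add
        ((hXXu α).differentiable (by simp) p) ((hYYu α).differentiable (by simp) p)
    have h2 : (fun q => ∑ α : Fin n, (Xd α (Xd α u) q + Yd α (Yd α u) q))
        = fun _ => (0 : EuclideanSpace ℝ (Fin m)) := funext hS
    rw [h2, fderiv_fun_const] at h1
    calc ∑ α : Fin n, (Xd α (Xd α v) p + Yd α (Yd α v) p)
        = ∑ α : Fin n, (fderiv ℝ (Xd α (Xd α u)) p (Tvec n)
            + fderiv ℝ (Yd α (Yd α u)) p (Tvec n)) := by
          refine Finset.sum_congr rfl fun α _ => ?_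
          rw [hcommX α, hcommY α]; rfl
      _ = (∑ α : Fin n, (fderiv ℝ (Xd α (Xd α u)) p + fderiv ℝ (Yd α (Yd α u)) p)) (Tvec n) := by
          simp [ContinuousLinearMap.sum_apply]
      _ = 0 := by rw [← h1]; simp
  -- Bochner computation for ‖v‖²
  have hXg : ∀ α : Fin n, Xd α (Xd α (fun q => ‖v q‖ ^ 2)) p
      = 2 * ‖Xd α v p‖ ^ 2 + 2 * (inner ℝ (Xd α (Xd α v) p) (v p) : ℝ) := fun α =>
    dd_dd_normsq hv (smooth_Xvec α) p
  have hYg : ∀ α : Fin n, Yd α (Yd α (fun q => ‖v q‖ ^ 2)) p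
      = 2 * ‖Yd α v p‖ ^ 2 + 2 * (inner ℝ (Yd α (Yd α v) p) (v p) : ℝ) := fun α =>
    dd_dd_normsq hv (smooth_Yvec α) p
  have hfinal : subLap (fun q => ‖v q‖ ^ 2) p
      = ∑ α : Fin n, (‖Xd α v p‖ ^ 2 + ‖Yd α v p‖ ^ 2) := by
    simp only [subLap]
    have : ∑ α : Fin n, (Xd α (Xd α (fun q => ‖v q‖ ^ 2)) p + Yd α (Yd α (fun q => ‖v q‖ ^ 2)) p)
        = ∑ α : Fin n, (2 * ‖Xd α v p‖ ^ 2 + 2 * ‖Yd α v p‖ ^ 2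
            + 2 * (inner ℝ (Xd α (Xd α v) p + Yd α (Yd α v) p) (v p) : ℝ)) := by
      refine Finset.sum_congr rfl fun α _ => ?_
      rw [hXg α, hYg α, inner_add_left]; ring
    rw [this]
    simp only [smul_eq_mul, Finset.sum_add_distrib, ← Finset.mul_sum, ← sum_inner, hzero,
      inner_zero_left]
    ring
  rw [hfinal]
end

section
/- Monotonicity and range of the profile function of the Carnot–Carathéodory distance on the Heisenberg group: define χ : [0,π) → ℝ by χ(0) = 0 and χ(φ) = φ/(sin φ)² − cot φ for φ ∈ (0,π). Then χ is continuous and strictly increasing on [0,π) and χ(φ) → +∞ as φ → π⁻; consequently, for every s ≥ 0 there is a unique φ ∈ [0,π) with χ(φ) = s. -/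
open Real Filter

/-- The profile function `χ(φ) = φ/(sin φ)² − cot φ` appearing in the explicit formula
for the Carnot–Carathéodory distance to the origin on the Heisenberg group.
(Note: with Lean's convention `x / 0 = 0`, this formula also gives `χ(0) = 0`.) -/
noncomputable def chi (φ : ℝ) : ℝ := φ / Real.sin φ ^ 2 - Real.cos φ / Real.sin φ

open Set Topology

/-!
On `(0, π)` one computes `χ' φ = 2 (sin φ - φ cos φ) / sin³ φ > 0`, since `φ cos φ < sin φ` there
(`φ < tan φ` below `π / 2`, trivially above it). Near `0` the bounds `0 ≤ χ ≤ tan` give continuity,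
and near `π` we have `χ = (φ - sin φ cos φ) / sin² φ` with numerator `→ π` and denominator `→ 0⁺`.
A continuous strictly increasing function on `[0, π)` that blows up at `π` takes every value
`≥ χ 0 = 0` exactly once.
-/

theorem existsUnique_eq_of_strictMonoOn_Ico {α δ : Type*} [ConditionallyCompleteLinearOrder α]
    [TopologicalSpace α] [OrderTopology α] [DenselyOrdered α] [LinearOrder δ] [TopologicalSpace δ]
    [OrderClosedTopology δ] {f : α → δ} {a b : α} {s : δ} (hab : a < b)
    (hcont : ContinuousOn f (Ico a b)) (hmono : StrictMonoOn f (Ico a b))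
    (htop : Tendsto f (𝓝[<] b) atTop) (hs : f a ≤ s) :
    ∃! x, x ∈ Ico a b ∧ f x = s := by
  have : (𝓝[<] b).NeBot := nhdsLT_neBot_of_exists_lt ⟨a, hab⟩
  obtain ⟨c, hsc, hc⟩ :=
    ((htop.eventually_ge_atTop s).and (eventually_mem_set.mpr (Ioo_mem_nhdsLT hab))).exists
  have hsub : Icc a c ⊆ Ico a b := Icc_subset_Ico_right hc.2
  obtain ⟨x, hx, hfx⟩ := intermediate_value_Icc hc.1.le (hcont.mono hsub) ⟨hs, hsc⟩
  exact ⟨x, ⟨hsub hx, hfx⟩, fun y hy => hmono.injOn hy.1 (hsub hx) (hy.2.trans hfx.symm)⟩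

lemma mul_cos_lt_sin {φ : ℝ} (h0 : 0 < φ) (hπ : φ < π) : φ * cos φ < sin φ := by
  have hsin : 0 < sin φ := sin_pos_of_pos_of_lt_pi h0 hπ
  rcases le_or_gt (cos φ) 0 with hcos | hcos
  · nlinarith
  · have hφ : φ < π / 2 := by
      by_contra! h
      linarith [cos_nonpos_of_pi_div_two_le_of_le h (by linarith)]
    have := lt_tan h0 hφ
    rwa [tan_eq_sin_div_cos, lt_div_iff₀ hcos] at this

lemma chi_zero : chi 0 = 0 := by simp [chi]

lemma chi_eq_div {φ : ℝ} (hs : sin φ ≠ 0) : chi φ = (φ - sin φ * cos φ) / sin φ ^ 2 := by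
  unfold chi
  field_simp

lemma hasDerivAt_chi {φ : ℝ} (hs : sin φ ≠ 0) :
    HasDerivAt chi (2 * (sin φ - φ * cos φ) / sin φ ^ 3) φ := by
  have h := ((hasDerivAt_id φ).div ((hasDerivAt_sin φ).pow 2) (pow_ne_zero 2 hs)).sub
    ((hasDerivAt_cos φ).div (hasDerivAt_sin φ) hs)
  refine h.congr_deriv ?_
  simp only [id, Pi.pow_apply]
  field_simp
  linear_combination sin φ ^ 2 * sin_sq_add_cos_sq φ

lemma chi_nonneg {φ : ℝ} (h : 0 ≤ φ) : 0 ≤ chi φ := by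
  rcases eq_or_ne (sin φ) 0 with hs | hs
  · simp [chi, hs]
  rw [chi_eq_div hs]
  have : sin (2 * φ) ≤ 2 * φ := sin_le (by linarith)
  rw [sin_two_mul] at this
  exact div_nonneg (by linarith) (sq_nonneg _)

lemma chi_le_tan {φ : ℝ} (h0 : 0 ≤ φ) (hφ : φ < π / 2) : chi φ ≤ tan φ := by
  rcases h0.eq_or_lt with rfl | h0
  · simp [chi_zero]
  have hsin : 0 < sin φ := sin_pos_of_pos_of_lt_pi h0 (by linarith [pi_pos])
  have hcos : 0 < cos φ := cos_pos_of_mem_Ioo ⟨by linarith, hφ⟩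
  rw [chi_eq_div hsin.ne', tan_eq_sin_div_cos, div_le_div_iff₀ (by positivity) hcos]
  nlinarith [mul_cos_lt_sin h0 (by linarith [pi_pos]), sin_sq_add_cos_sq φ]

lemma continuousWithinAt_chi_zero : ContinuousWithinAt chi (Ici 0) 0 := by
  have htan : Tendsto tan (𝓝[≥] 0) (𝓝 0) := by
    simpa using (continuousAt_tan (x := 0) |>.mpr (by simp)).tendsto.mono_left nhdsWithin_le_nhds
  have hnear : ∀ᶠ φ in 𝓝[≥] (0 : ℝ), φ ∈ Ico 0 (π / 2) := Ico_mem_nhdsGE (by positivity)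
  rw [ContinuousWithinAt, chi_zero]
  exact tendsto_of_tendsto_of_tendsto_of_le_of_le' tendsto_const_nhds htan
    (hnear.mono fun φ hφ => chi_nonneg hφ.1) (hnear.mono fun φ hφ => chi_le_tan hφ.1 hφ.2)

lemma chi_continuousOn : ContinuousOn chi (Ico 0 π) := by
  intro φ hφ
  rcases hφ.1.eq_or_lt with rfl | h0
  · exact continuousWithinAt_chi_zero.mono Ico_subset_Ici_self
  · exact (hasDerivAt_chi (sin_pos_of_pos_of_lt_pi h0 hφ.2).ne').continuousAt.continuousWithinAt

lemma chi_strictMonoOn : StrictMonoOn chi (Ico 0 π) := by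
  refine strictMonoOn_of_deriv_pos (convex_Ico 0 π) chi_continuousOn fun φ hφ => ?_
  rw [interior_Ico] at hφ
  have hsin := sin_pos_of_pos_of_lt_pi hφ.1 hφ.2
  rw [(hasDerivAt_chi hsin.ne').deriv]
  have := mul_cos_lt_sin hφ.1 hφ.2
  exact div_pos (by linarith) (by positivity)

lemma tendsto_chi_nhdsLT_pi : Tendsto chi (𝓝[<] π) atTop := by
  have hnear : ∀ᶠ φ in 𝓝[<] π, 0 < sin φ := by
    filter_upwards [Ioo_mem_nhdsLT pi_pos] with φ hφ using sin_pos_of_pos_of_lt_pi hφ.1 hφ.2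
  have hnum : Tendsto (fun φ => φ - sin φ * cos φ) (𝓝[<] π) (𝓝 π) := by
    have : ContinuousAt (fun φ => φ - sin φ * cos φ) π := by fun_prop
    simpa using this.tendsto.mono_left nhdsWithin_le_nhds
  have hden : Tendsto (fun φ => sin φ ^ 2) (𝓝[<] π) (𝓝[>] 0) := by
    refine tendsto_nhdsWithin_iff.mpr ⟨?_, hnear.mono fun φ hφ => pow_pos hφ 2⟩
    have : ContinuousAt (fun φ => sin φ ^ 2) π := by fun_prop
    simpa using this.tendsto.mono_left nhdsWithin_le_nhds
  refine (hnum.pos_mul_atTop pi_pos (tendsto_inv_nhdsGT_zero.comp hden)).congr' ?_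
  filter_upwards [hnear] with φ hφ
  rw [chi_eq_div hφ.ne', div_eq_mul_inv, Function.comp_apply]

/-- `χ` is continuous and strictly increasing on `[0, π)`, tends to
`+∞` as `φ → π⁻`, and hence for every `s ≥ 0` there is a unique `φ ∈ [0, π)` with
`χ(φ) = s`. -/
theorem chi_strictMono_surjective :
    ContinuousOn chi (Set.Ico 0 π) ∧
    StrictMonoOn chi (Set.Ico 0 π) ∧
    Tendsto chi (nhdsWithin π (Set.Iio π)) atTop ∧
    (∀ s : ℝ, 0 ≤ s → ∃! φ : ℝ, φ ∈ Set.Ico 0 π ∧ chi φ = s) :=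
  ⟨chi_continuousOn, chi_strictMonoOn, tendsto_chi_nhdsLT_pi, fun _ hs =>
    existsUnique_eq_of_strictMonoOn_Ico pi_pos chi_continuousOn chi_strictMonoOn
      tendsto_chi_nhdsLT_pi (chi_zero.symm ▸ hs)⟩
end
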